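/- The number of solutions (x₁,x₂,x₃,y₁,y₂,y₃) ∈ F³ × (𝔽_p \ {0})³ of the system y₁x₁² + y₂x₂² + y₃x₃² = 0, y₁x₁^{d₁} + y₂x₂^{d₁} + y₃x₃^{d₁} = 0 and y₁x₁^{d₂} + y₂x₂^{d₂} + y₃x₃^{d₂} = 0 is (p-1)³·(p^{m+1} + p^m − p); in particular it equals the number of solutions of the system consisting of only the first two equations. -/

import Mathlib

/-!
Write `ι : 𝔽_p → F` for the structure map and `q = p ^ k`. For a solution `(x, y)` of the first
two equations, raising the first to the power `q` shows that `x` and `x^q = (x_i ^ q)_i` span a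
totally isotropic subspace of the nondegenerate ternary form `∑ ι(y_i) X_i²` over `F`, so they
are proportional. Hence `x` is an `F`-multiple of a vector fixed by `z ↦ z ^ q`, and since
`gcd(m, k) = 1` such a vector has coordinates in `𝔽_p`. So the solutions are exactly the points
of the `F`-lines through the `𝔽_p`-points of the conic `∑ y_i c_i² = 0`, and these satisfy all
three equations because `c ^ q = c` on `𝔽_p`. The affine cone of the conic has `p²` points
(a quadratic character sum), i.e. `p + 1` projective points, and distinct lines meet only at
`0`; so each `y` contributes `(p + 1)(p^m - 1) + 1 = p^{m+1} + p^m - p` solutions.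
-/

open Finset

section QuadraticCharSums

variable {K : Type*} [Field K] [Fintype K] [DecidableEq K]

local notation "χ" => quadraticChar K

theorem card_filter_sq_eq (hK : ringChar K ≠ 2) (b : K) : (#{u : K | u ^ 2 = b} : ℤ) = χ b + 1 := by
  rw [← quadraticChar_card_sqrts hK b, Set.toFinset_ofPred]

theorem sum_quadraticChar_mul_sq (α : K) :
    ∑ u : K, χ (α * u ^ 2) = χ α * (Fintype.card K - 1) := by
  have h : ∀ u ∈ ({0}ᶜ : Finset K), χ (α * u ^ 2) = χ α := fun u hu => by
    rw [map_mul, quadraticChar_sq_one' (by simpa using hu), mul_one]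
  rw [Fintype.sum_eq_add_sum_compl 0, sum_congr rfl h, sum_const, card_compl, card_singleton,
    nsmul_eq_mul, Nat.cast_sub Fintype.card_pos]
  simp [mul_comm]

/-- The substitution `u ^ 2 = -(γ / α) t` turns the sum into the Jacobi sum `J(χ, χ) = -χ(-1)`. -/
theorem sum_quadraticChar_mul_sq_add (hK : ringChar K ≠ 2) {α γ : K} (hα : α ≠ 0) (hγ : γ ≠ 0) :
    ∑ u : K, χ (α * u ^ 2 + γ) = -χ α := by
  have hfib : ∑ u : K, χ (α * u ^ 2 + γ) = ∑ b : K, (χ b + 1) * χ (α * b + γ) := by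
    rw [← sum_fiberwise' univ (fun u : K => u ^ 2) fun b => χ (α * b + γ)]
    refine sum_congr rfl fun b _ => ?_
    rw [sum_const, nsmul_eq_mul, card_filter_sq_eq hK]
  have hlin : ∑ b : K, χ (α * b + γ) = 0 := by
    rw [Fintype.sum_bijective (fun b => α * b + γ) ?_ _ χ fun _ => rfl,
      quadraticChar_sum_zero hK]
    exact ((Equiv.mulLeft₀ α hα).trans (Equiv.addRight γ)).bijective
  have hjac : ∑ b : K, χ b * χ (α * b + γ) = -χ α := by
    have hsub : ∀ t : K, χ (-(γ / α) * t) * χ (α * (-(γ / α) * t) + γ)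
        = χ (-α) * (χ t * χ (1 - t)) := fun t => by
      rw [← map_mul, show -(γ / α) * t * (α * (-(γ / α) * t) + γ)
          = (γ / α) ^ 2 * (-α * (t * (1 - t))) by field_simp; ring,
        map_mul, quadraticChar_sq_one' (div_ne_zero hγ hα), one_mul, map_mul, map_mul]
    have hJ := jacobiSum_nontrivial_inv (quadraticChar_ne_one hK)
    rw [(quadraticChar_isQuadratic K).inv] at hJ
    rw [← Fintype.sum_bijective (fun t => -(γ / α) * t)
        (Equiv.mulLeft₀ _ (neg_ne_zero.2 (div_ne_zero hγ hα))).bijective _ _ fun _ => rfl]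
    simp only [hsub, ← mul_sum]
    rw [← jacobiSum, hJ, neg_eq_neg_one_mul α, map_mul]
    linear_combination -χ α * quadraticChar_sq_one (neg_ne_zero.2 (one_ne_zero (α := K)))
  simp only [hfib, add_mul, one_mul, sum_add_distrib, hlin, hjac, add_zero]

theorem sum_sum_quadraticChar_mul_sq_add_mul_sq (hK : ringChar K ≠ 2) {α β : K} (hα : α ≠ 0)
    (hβ : β ≠ 0) : ∑ u : K, ∑ v : K, χ (α * u ^ 2 + β * v ^ 2) = 0 := by
  have h : ∀ u ∈ ({0}ᶜ : Finset K), ∑ v : K, χ (α * u ^ 2 + β * v ^ 2) = -χ β := fun u hu => by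
    simp_rw [add_comm (α * u ^ 2)]
    exact sum_quadraticChar_mul_sq_add hK hβ (mul_ne_zero hα (pow_ne_zero 2 (by simpa using hu)))
  rw [Fintype.sum_eq_add_sum_compl 0, sum_congr rfl h]
  simp only [sum_const, card_compl, card_singleton, nsmul_eq_mul, ne_eq, OfNat.ofNat_ne_zero,
    not_false_eq_true, zero_pow, mul_zero, zero_add, sum_quadraticChar_mul_sq,
    Nat.cast_sub Fintype.card_pos]
  ring

theorem card_sum_mul_sq_eq_zero (hK : ringChar K ≠ 2) {a : Fin 3 → K} (ha : ∀ i, a i ≠ 0) :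
    #{c : Fin 3 → K | ∑ i, a i * c i ^ 2 = 0} = Fintype.card K ^ 2 := by
  -- `#{w | a₂ w² = -(a₀ u² + a₁ v²)} = χ(-(a₀ u² + a₁ v²) / a₂) + 1`, summed over `(u, v)`.
  have hsum : (#{c : Fin 3 → K | ∑ i, a i * c i ^ 2 = 0} : ℤ)
      = ∑ u : K, ∑ v : K, (χ ((-a 0 / a 2) * u ^ 2 + (-a 1 / a 2) * v ^ 2) + 1) := by
    rw [natCast_card_filter, ← (Fin.consEquiv fun _ => K).sum_comp, Fintype.sum_prod_type,
      ← sum_congr rfl fun u _ => (finTwoArrowEquiv K).symm.sum_comp _]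
    refine sum_congr rfl fun u _ => ?_
    rw [Fintype.sum_prod_type]
    refine sum_congr rfl fun v _ => ?_
    rw [← card_filter_sq_eq hK, natCast_card_filter]
    refine sum_congr rfl fun w _ => if_congr ?_ rfl rfl
    simp only [finTwoArrowEquiv_symm_apply, Fin.consEquiv_apply, Matrix.Fin.cons_vecCons,
      Fin.sum_univ_three, Matrix.cons_val_zero, Matrix.cons_val_one, Matrix.cons_val_two,
      Matrix.tail_cons, Matrix.head_cons]
    have := ha 2
    constructor <;> intro h
    · field_simp
      linear_combination h
    · field_simp at h
      linear_combination h
  have hχ := sum_sum_quadraticChar_mul_sq_add_mul_sq hK (div_ne_zero (neg_ne_zero.2 (ha 0)) (ha 2))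
    (div_ne_zero (neg_ne_zero.2 (ha 1)) (ha 2))
  simp only [sum_add_distrib, hχ, sum_const, card_univ, nsmul_eq_mul] at hsum
  have h : (#{c : Fin 3 → K | ∑ i, a i * c i ^ 2 = 0} : ℤ) = (Fintype.card K : ℤ) ^ 2 := by
    rw [hsum]; ring
  exact_mod_cast h

end QuadraticCharSums

section Lines

variable {K F ι : Type*} [Field K] [Field F] [Algebra K F]

theorem eq_smul_of_smul_algebraMap_comp_eq {c c₀ : ι → K} {t t₀ : F} (ht : t ≠ 0) {j : ι}
    (hj : c₀ j ≠ 0) (h : t • (algebraMap K F ∘ c) = t₀ • (algebraMap K F ∘ c₀)) :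
    c = (c j / c₀ j) • c₀ := by
  have hi : ∀ i, t * algebraMap K F (c i) = t₀ * algebraMap K F (c₀ i) := fun i => congrFun h i
  funext i
  have hcross : algebraMap K F (c i * c₀ j - c j * c₀ i) = 0 := by
    refine (mul_eq_zero.1 ?_).resolve_left ht
    rw [map_sub, map_mul, map_mul]
    linear_combination algebraMap K F (c₀ j) * hi i - algebraMap K F (c₀ i) * hi j
  rw [map_eq_zero, sub_eq_zero] at hcross
  simp only [Pi.smul_apply, smul_eq_mul]
  field_simp
  exact hcross

variable [Fintype K] [DecidableEq K] [Fintype F] [DecidableEq F] [Fintype ι]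

/-- The fibre through `(c₀, t₀)` is `{(l • c₀, t₀ / l) | l ∈ Kˣ}`. -/
theorem card_fiber_smul_algebraMap_comp {C : Finset (ι → K)} (hC : ∀ c ∈ C, ∀ l : K, l • c ∈ C)
    {ct₀ : (ι → K) × F} (h₀ : ct₀ ∈ C.erase 0 ×ˢ univ.erase (0 : F)) :
    #{ct ∈ C.erase 0 ×ˢ univ.erase (0 : F) |
      ct.2 • (algebraMap K F ∘ ct.1) = ct₀.2 • (algebraMap K F ∘ ct₀.1)} =
      Fintype.card K - 1 := by
  obtain ⟨c₀, t₀⟩ := ct₀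
  simp only [mem_product, mem_erase, mem_univ, and_true] at h₀
  obtain ⟨⟨hc₀, hc₀C⟩, ht₀⟩ := h₀
  obtain ⟨j, hj⟩ : ∃ j, c₀ j ≠ 0 := Function.ne_iff.1 hc₀
  rw [← card_univ, ← card_erase_of_mem (mem_univ (0 : K))]
  symm
  apply card_nbij' (fun l => (l • c₀, t₀ / algebraMap K F l)) (fun ct => ct.1 j / c₀ j)
  · intro l hl
    have hl0 : l ≠ 0 := by simpa using hl
    have hl' : algebraMap K F l ≠ 0 := (map_ne_zero _).2 hl0
    simp only [coe_filter, mem_product, mem_erase, mem_univ, and_true, Set.mem_ofPred_eq]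
    refine ⟨⟨⟨smul_ne_zero hl0 hc₀, hC _ hc₀C _⟩, by simp [hl0, ht₀]⟩, ?_⟩
    funext i
    simp only [Pi.smul_apply, Function.comp_apply, smul_eq_mul, map_mul]
    field_simp
  · rintro ⟨c, t⟩ h
    simp only [coe_filter, mem_product, mem_erase, mem_univ, and_true, Set.mem_ofPred_eq] at h
    obtain ⟨⟨⟨hc, -⟩, ht⟩, h⟩ := h
    have hprop := eq_smul_of_smul_algebraMap_comp_eq ht hj h
    simp only [coe_erase, coe_univ, Set.mem_sdiff, Set.mem_univ, Set.mem_singleton_iff, true_and]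
    intro h0
    exact hc (by rw [hprop, h0, zero_smul])
  · intro l _
    simp [hj]
  · rintro ⟨c, t⟩ h
    simp only [coe_filter, mem_product, mem_erase, mem_univ, and_true, Set.mem_ofPred_eq] at h
    obtain ⟨⟨⟨hc, -⟩, ht⟩, h⟩ := h
    have hprop := eq_smul_of_smul_algebraMap_comp_eq ht hj h
    refine Prod.ext hprop.symm ?_
    have hcj : algebraMap K F (c j) ≠ 0 :=
      (map_ne_zero _).2 fun h0 => hc (by rw [hprop, h0, zero_div, zero_smul])
    have hc₀j : algebraMap K F (c₀ j) ≠ 0 := (map_ne_zero _).2 hj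
    have hj' := congrFun h j
    simp only [Pi.smul_apply, Function.comp_apply, smul_eq_mul] at hj' ⊢
    rw [map_div₀]
    field_simp
    linear_combination -hj'

theorem card_image_smul_algebraMap_comp_mul {C : Finset (ι → K)}
    (hC : ∀ c ∈ C, ∀ l : K, l • c ∈ C) :
    #((C.erase 0 ×ˢ univ.erase (0 : F)).image fun ct => ct.2 • (algebraMap K F ∘ ct.1))
      * (Fintype.card K - 1) = #(C.erase 0) * (Fintype.card F - 1) := by
  rw [← card_univ (α := F), ← card_erase_of_mem (mem_univ 0), ← card_product,
    card_eq_sum_card_image (fun ct : (ι → K) × F => ct.2 • (algebraMap K F ∘ ct.1)),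
    ← smul_eq_mul, ← sum_const]
  refine sum_congr rfl fun x hx => ?_
  obtain ⟨ct₀, h₀, rfl⟩ := mem_image.1 hx
  exact (card_fiber_smul_algebraMap_comp hC h₀).symm

end Lines

section RationalLines

variable {K F : Type*} [Field K] [Field F] [Algebra K F]

def IsOnRationalLine (a : Fin 3 → K) (x : Fin 3 → F) : Prop :=
  ∃ t : F, ∃ c : Fin 3 → K, ∑ i, a i * c i ^ 2 = 0 ∧ x = t • (algebraMap K F ∘ c)

theorem IsOnRationalLine.sum_mul_pow_eq_zero {a : Fin 3 → K} {x : Fin 3 → F}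
    (h : IsOnRationalLine a x) {e : ℕ} (he : ∀ c : K, c ^ e = c ^ 2) :
    ∑ i, algebraMap K F (a i) * x i ^ e = 0 := by
  obtain ⟨t, c, hc, rfl⟩ := h
  calc ∑ i, algebraMap K F (a i) * (t • (algebraMap K F ∘ c)) i ^ e
      = t ^ e * algebraMap K F (∑ i, a i * c i ^ 2) := by
        simp only [Pi.smul_apply, Function.comp_apply, smul_eq_mul, mul_pow, ← map_pow, he,
          map_sum, map_mul, mul_sum]
        exact sum_congr rfl fun i _ => by ring
    _ = 0 := by rw [hc, map_zero, mul_zero]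

variable [Fintype K] [Fintype F]

theorem card_isOnRationalLine (hK : ringChar K ≠ 2) {a : Fin 3 → K} (ha : ∀ i, a i ≠ 0) :
    Nat.card {x : Fin 3 → F // IsOnRationalLine a x} =
      (Fintype.card K + 1) * (Fintype.card F - 1) + 1 := by
  classical
  set C : Finset (Fin 3 → K) := {c | ∑ i, a i * c i ^ 2 = 0}
  have hC : ∀ c ∈ C, ∀ l : K, l • c ∈ C := fun c hc l => by
    simp only [C, mem_filter, mem_univ, true_and, Pi.smul_apply, smul_eq_mul] at hc ⊢
    simp only [mul_pow, mul_left_comm _ (l ^ 2), ← mul_sum, hc, mul_zero]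
  set D := (C.erase 0 ×ˢ univ.erase (0 : F)).image fun ct => ct.2 • (algebraMap K F ∘ ct.1)
  have hset : ({x | IsOnRationalLine a x} : Finset (Fin 3 → F)) = insert 0 D := by
    ext x
    simp only [mem_filter, mem_insert, D, mem_image, mem_univ, true_and, mem_product, mem_erase,
      and_true, Prod.exists]
    constructor
    · rintro ⟨t, c, hc, rfl⟩
      by_cases hx : t • (algebraMap K F ∘ c) = 0
      · exact Or.inl hx
      · refine Or.inr ⟨c, t, ⟨⟨fun h0 => hx ?_, by simpa [C] using hc⟩, fun h0 => hx ?_⟩, rfl⟩ <;>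
          simp [h0]
    · rintro (rfl | ⟨c, t, ⟨⟨-, hc⟩, -⟩, rfl⟩)
      · exact ⟨0, 0, by simp, by simp⟩
      · exact ⟨t, c, by simpa [C] using hc, rfl⟩
  have h0 : (0 : Fin 3 → F) ∉ D := by
    simp only [D, mem_image, mem_product, mem_erase, mem_univ, and_true, Prod.exists, not_exists,
      not_and]
    rintro c t ⟨⟨hc, -⟩, ht⟩ h
    rcases smul_eq_zero.1 h with h | h
    · exact ht h
    · exact hc (funext fun i => by simpa using congrFun h i)
  have hD : #D = (Fintype.card K + 1) * (Fintype.card F - 1) := by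
    have hmul := card_image_smul_algebraMap_comp_mul (F := F) hC
    rw [card_erase_of_mem (by simp [C]), card_sum_mul_sq_eq_zero hK ha] at hmul
    refine Nat.eq_of_mul_eq_mul_right (Nat.sub_pos_of_lt (Fintype.one_lt_card (α := K))) ?_
    rw [hmul, mul_right_comm, ← Nat.sq_sub_sq, one_pow]
  rw [Nat.card_eq_fintype_card, Fintype.card_subtype, hset, card_insert_of_notMem h0, hD]

end RationalLines

theorem mul_eq_mul_of_isotropic {K : Type*} [Field K] {a x x' : Fin 3 → K} (ha : ∀ i, a i ≠ 0)
    (hQ : ∑ i, a i * x i ^ 2 = 0) (hB : ∑ i, a i * x i * x' i = 0)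
    (hQ' : ∑ i, a i * x' i ^ 2 = 0) (i j : Fin 3) : x i * x' j = x j * x' i := by
  simp only [Fin.sum_univ_three] at hQ hB hQ'
  -- Each `a_j a_k (x_j x'_k - x_k x'_j) ^ 2` lies in the ideal spanned by `Q(x), B(x, x'), Q(x')`.
  have h0 : a 1 * a 2 * (x 1 * x' 2 - x 2 * x' 1) ^ 2 = 0 := by
    linear_combination (a 0 * x 0 * x' 0 - a 1 * x 1 * x' 1 - a 2 * x 2 * x' 2) * hB
      + (a 1 * x' 1 ^ 2 + a 2 * x' 2 ^ 2) * hQ - a 0 * x 0 ^ 2 * hQ'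
  have h1 : a 2 * a 0 * (x 2 * x' 0 - x 0 * x' 2) ^ 2 = 0 := by
    linear_combination (a 1 * x 1 * x' 1 - a 2 * x 2 * x' 2 - a 0 * x 0 * x' 0) * hB
      + (a 2 * x' 2 ^ 2 + a 0 * x' 0 ^ 2) * hQ - a 1 * x 1 ^ 2 * hQ'
  have h2 : a 0 * a 1 * (x 0 * x' 1 - x 1 * x' 0) ^ 2 = 0 := by
    linear_combination (a 2 * x 2 * x' 2 - a 0 * x 0 * x' 0 - a 1 * x 1 * x' 1) * hB
      + (a 0 * x' 0 ^ 2 + a 1 * x' 1 ^ 2) * hQ - a 2 * x 2 ^ 2 * hQ'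
  simp only [mul_eq_zero, ha, false_or, pow_eq_zero_iff two_ne_zero, sub_eq_zero] at h0 h1 h2
  fin_cases i <;> fin_cases j <;> grind

section PrimeField

variable {p : ℕ} [Fact p.Prime] {F : Type*} [Field F] [Algebra (ZMod p) F]

theorem exists_algebraMap_eq_of_pow_eq_self {z : F} (hz : z ^ p = z) :
    ∃ c : ZMod p, algebraMap (ZMod p) F c = z := by
  have : CharP F p := charP_of_injective_algebraMap (algebraMap (ZMod p) F).injective p
  have hbot := (Subfield.mem_bot_iff_pow_eq_self F p).2 hz
  rw [← ZMod.fieldRange_castHom_eq_bot p, RingHom.mem_fieldRange] at hbot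
  rwa [Subsingleton.elim (algebraMap (ZMod p) F) (ZMod.castHom dvd_rfl F)]

theorem exists_algebraMap_eq_of_pow_pow_eq_self [Fintype F] {m k : ℕ}
    (hF : Fintype.card F = p ^ m) (hmk : m.gcd k = 1) {z : F} (hz : z ^ p ^ k = z) :
    ∃ c : ZMod p, algebraMap (ZMod p) F c = z := by
  have : CharP F p := charP_of_injective_algebraMap (algebraMap (ZMod p) F).injective p
  have hm : Function.IsPeriodicPt (frobenius F p) m z := by
    rw [Function.IsPeriodicPt, Function.IsFixedPt, iterate_frobenius, ← hF, FiniteField.pow_card]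
  have hk : Function.IsPeriodicPt (frobenius F p) k z := by
    rwa [Function.IsPeriodicPt, Function.IsFixedPt, iterate_frobenius]
  have h1 := hm.gcd hk
  rw [hmk, Function.IsPeriodicPt, Function.IsFixedPt, Function.iterate_one, frobenius_def] at h1
  exact exists_algebraMap_eq_of_pow_eq_self h1

theorem ZMod.pow_card_pow_add_one (j : ℕ) (c : ZMod p) : c ^ (p ^ j + 1) = c ^ 2 := by
  rw [pow_succ, ZMod.pow_card_pow, sq]

theorem isOnRationalLine_of_sum_eq_zero [Fintype F] {m k : ℕ} (hF : Fintype.card F = p ^ m)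
    (hmk : m.gcd k = 1) {y : Fin 3 → ZMod p} (hy : ∀ i, y i ≠ 0) {x : Fin 3 → F}
    (h2 : ∑ i, algebraMap (ZMod p) F (y i) * x i ^ 2 = 0)
    (hk : ∑ i, algebraMap (ZMod p) F (y i) * x i ^ (p ^ k + 1) = 0) :
    IsOnRationalLine y x := by
  have : CharP F p := charP_of_injective_algebraMap (algebraMap (ZMod p) F).injective p
  have hfrob : ∑ i, algebraMap (ZMod p) F (y i) * (x i ^ p ^ k) ^ 2 = 0 := by
    calc _ = (∑ i, algebraMap (ZMod p) F (y i) * x i ^ 2) ^ p ^ k := by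
          simp only [sum_pow_char_pow, mul_pow, ← map_pow, ZMod.pow_card_pow, ← pow_mul, mul_comm]
      _ = 0 := by rw [h2, zero_pow (pow_ne_zero _ (Fact.out : p.Prime).ne_zero)]
  have hprop := mul_eq_mul_of_isotropic (a := fun i => algebraMap (ZMod p) F (y i))
    (by simpa using hy) h2 (by simpa [pow_succ', mul_assoc] using hk) hfrob
  by_cases hx : x = 0
  · exact ⟨0, 0, by simp, by simp [hx]⟩
  obtain ⟨j, hj⟩ : ∃ j, x j ≠ 0 := Function.ne_iff.1 hx
  have hfix : ∀ i, (x i / x j) ^ p ^ k = x i / x j := fun i => by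
    rw [div_pow, div_eq_div_iff (pow_ne_zero _ hj) hj, mul_comm]
    exact (hprop i j).symm
  choose c hc using fun i => exists_algebraMap_eq_of_pow_pow_eq_self hF hmk (hfix i)
  refine ⟨x j, c, (algebraMap (ZMod p) F).injective ?_, funext fun i => ?_⟩
  · simp only [map_sum, map_mul, map_pow, hc, div_pow, mul_div_assoc', ← sum_div, h2, zero_div,
      map_zero]
  · simp only [Pi.smul_apply, Function.comp_apply, hc, smul_eq_mul]
    field_simp

theorem isOnRationalLine_iff_two_sums [Fintype F] {m k : ℕ} (hF : Fintype.card F = p ^ m)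
    (hmk : m.gcd k = 1) {y : Fin 3 → ZMod p} (hy : ∀ i, y i ≠ 0) {x : Fin 3 → F} :
    IsOnRationalLine y x ↔
      ∑ i, algebraMap (ZMod p) F (y i) * x i ^ 2 = 0 ∧
      ∑ i, algebraMap (ZMod p) F (y i) * x i ^ (p ^ k + 1) = 0 :=
  ⟨fun h => ⟨h.sum_mul_pow_eq_zero fun _ => rfl,
      h.sum_mul_pow_eq_zero (ZMod.pow_card_pow_add_one k)⟩,
    fun ⟨h2, hk⟩ => isOnRationalLine_of_sum_eq_zero hF hmk hy h2 hk⟩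

theorem isOnRationalLine_iff_three_sums [Fintype F] {m k : ℕ} (hF : Fintype.card F = p ^ m)
    (hmk : m.gcd k = 1) {y : Fin 3 → ZMod p} (hy : ∀ i, y i ≠ 0) {x : Fin 3 → F} :
    IsOnRationalLine y x ↔
      ∑ i, algebraMap (ZMod p) F (y i) * x i ^ 2 = 0 ∧
      ∑ i, algebraMap (ZMod p) F (y i) * x i ^ (p ^ k + 1) = 0 ∧
      ∑ i, algebraMap (ZMod p) F (y i) * x i ^ (p ^ (2 * k) + 1) = 0 := by
  rw [← and_assoc, ← isOnRationalLine_iff_two_sums hF hmk hy, iff_self_and]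
  exact fun h => h.sum_mul_pow_eq_zero (ZMod.pow_card_pow_add_one (2 * k))

end PrimeField

theorem card_subtype_prod_eq_mul {α β : Type*} [Finite α] [Fintype β] {P : β → Prop}
    {R : β → α → Prop} {n : ℕ} (hR : ∀ b, P b → Nat.card {a // R b a} = n) :
    Nat.card {s : α × β // P s.2 ∧ R s.2 s.1} = Nat.card {b // P b} * n := by
  classical
  let e : {s : α × β // P s.2 ∧ R s.2 s.1} ≃ Σ b : {b // P b}, {a // R b a} :=
    { toFun := fun s => ⟨⟨s.1.2, s.2.1⟩, s.1.1, s.2.2⟩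
      invFun := fun s => ⟨(s.2.1, s.1.1), s.1.2, s.2.2⟩
      left_inv := fun _ => rfl
      right_inv := fun _ => rfl }
  rw [Nat.card_congr e, Nat.card_sigma, sum_congr rfl fun b _ => hR b.1 b.2, sum_const,
    card_univ, smul_eq_mul, Nat.card_eq_fintype_card]

theorem card_pi_ne_zero {ι K : Type*} [Fintype ι] [Zero K] [Fintype K] :
    Nat.card {y : ι → K // ∀ i, y i ≠ 0} = (Fintype.card K - 1) ^ Fintype.card ι := by
  classical
  rw [Nat.card_congr (Equiv.subtypePiEquivPi (p := fun (_ : ι) (z : K) => z ≠ 0)), Nat.card_pi]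
  simp [Nat.card_eq_fintype_card, Fintype.card_subtype_compl]

theorem stmt_6_general (p m k : ℕ) [Fact p.Prime] (hp : Odd p) (hgcd : Nat.gcd m k = 1)
    (F : Type) [Field F] [Fintype F] [Algebra (ZMod p) F]
    (hF : Fintype.card F = p ^ m) :
    Nat.card {s : (Fin 3 → F) × (Fin 3 → ZMod p) //
      (∀ i, s.2 i ≠ 0) ∧
      ∑ i, algebraMap (ZMod p) F (s.2 i) * s.1 i ^ 2 = 0 ∧
      ∑ i, algebraMap (ZMod p) F (s.2 i) * s.1 i ^ (p ^ k + 1) = 0 ∧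
      ∑ i, algebraMap (ZMod p) F (s.2 i) * s.1 i ^ (p ^ (2 * k) + 1) = 0} =
    (p - 1) ^ 3 * (p ^ (m + 1) + p ^ m - p) ∧
    Nat.card {s : (Fin 3 → F) × (Fin 3 → ZMod p) //
      (∀ i, s.2 i ≠ 0) ∧
      ∑ i, algebraMap (ZMod p) F (s.2 i) * s.1 i ^ 2 = 0 ∧
      ∑ i, algebraMap (ZMod p) F (s.2 i) * s.1 i ^ (p ^ k + 1) = 0 ∧
      ∑ i, algebraMap (ZMod p) F (s.2 i) * s.1 i ^ (p ^ (2 * k) + 1) = 0} =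
    Nat.card {s : (Fin 3 → F) × (Fin 3 → ZMod p) //
      (∀ i, s.2 i ≠ 0) ∧
      ∑ i, algebraMap (ZMod p) F (s.2 i) * s.1 i ^ 2 = 0 ∧
      ∑ i, algebraMap (ZMod p) F (s.2 i) * s.1 i ^ (p ^ k + 1) = 0} := by
  have hK : ringChar (ZMod p) ≠ 2 := by
    rw [ZMod.ringChar_zmod_n]
    rintro rfl
    exact absurd hp (by decide)
  have harith : (p + 1) * (p ^ m - 1) + 1 = p ^ (m + 1) + p ^ m - p := by
    have := Nat.one_le_pow m p (Fact.out : p.Prime).pos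
    zify [this, (Nat.le_self_pow m.succ_ne_zero p).trans (Nat.le_add_right _ (p ^ m))]
    ring
  rw [Nat.card_congr (Equiv.subtypeEquivRight fun s => and_congr_right fun hy =>
      (isOnRationalLine_iff_three_sums hF hgcd hy).symm),
    Nat.card_congr (Equiv.subtypeEquivRight fun s => and_congr_right fun hy =>
      (isOnRationalLine_iff_two_sums hF hgcd hy).symm),
    card_subtype_prod_eq_mul (P := fun y => ∀ i, y i ≠ 0) (R := IsOnRationalLine)
      fun y hy => card_isOnRationalLine hK hy, card_pi_ne_zero, ZMod.card, Fintype.card_fin, hF,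
    harith]
  exact ⟨rfl, rfl⟩

/-- Remark after Lemma 3.3: the number of solutions
`(x₁,x₂,x₃,y₁,y₂,y₃) ∈ F³ × (𝔽_p*)³` of the three equations
`y₁x₁² + y₂x₂² + y₃x₃² = 0`, `y₁x₁^{d₁} + y₂x₂^{d₁} + y₃x₃^{d₁} = 0` and
`y₁x₁^{d₂} + y₂x₂^{d₂} + y₃x₃^{d₂} = 0` is `(p-1)³·(p^{m+1} + p^m - p)`;
in particular it equals the number of solutions of the first two equations only. -/
theorem stmt_6 (p m k : ℕ) [Fact p.Prime] (hp : Odd p) (hm5 : 5 ≤ m) (hm : Odd m)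
    (hk : 0 < k) (hgcd : Nat.gcd m k = 1)
    (F : Type) [Field F] [Fintype F] [Algebra (ZMod p) F]
    (hF : Fintype.card F = p ^ m) :
    Nat.card {s : (Fin 3 → F) × (Fin 3 → ZMod p) //
      (∀ i, s.2 i ≠ 0) ∧
      ∑ i, algebraMap (ZMod p) F (s.2 i) * s.1 i ^ 2 = 0 ∧
      ∑ i, algebraMap (ZMod p) F (s.2 i) * s.1 i ^ (p ^ k + 1) = 0 ∧
      ∑ i, algebraMap (ZMod p) F (s.2 i) * s.1 i ^ (p ^ (2 * k) + 1) = 0} =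
    (p - 1) ^ 3 * (p ^ (m + 1) + p ^ m - p) ∧
    Nat.card {s : (Fin 3 → F) × (Fin 3 → ZMod p) //
      (∀ i, s.2 i ≠ 0) ∧
      ∑ i, algebraMap (ZMod p) F (s.2 i) * s.1 i ^ 2 = 0 ∧
      ∑ i, algebraMap (ZMod p) F (s.2 i) * s.1 i ^ (p ^ k + 1) = 0 ∧
      ∑ i, algebraMap (ZMod p) F (s.2 i) * s.1 i ^ (p ^ (2 * k) + 1) = 0} =
    Nat.card {s : (Fin 3 → F) × (Fin 3 → ZMod p) //
      (∀ i, s.2 i ≠ 0) ∧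
      ∑ i, algebraMap (ZMod p) F (s.2 i) * s.1 i ^ 2 = 0 ∧
      ∑ i, algebraMap (ZMod p) F (s.2 i) * s.1 i ^ (p ^ k + 1) = 0} :=
  stmt_6_general p m k hp hgcd F hF
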